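/- arXiv:2104.11366 — 8 statements merged into one kernel-verified Lean document; each statement's English description precedes it below -/
import Mathlib

section
/- If p is a prime, then σ(n)/n = (p+1)/p if and only if n = p. -/
theorem abundancy_eq_succ_div_prime_iff (p n : ℕ) (hp : p.Prime) (hn : 0 < n) :
    (ArithmeticFunction.sigma 1 n : ℚ) / n = ((p : ℚ) + 1) / p ↔ n = p := by
  have hp0 : (p : ℚ) ≠ 0 := Nat.cast_ne_zero.mpr hp.pos.ne'
  have hn0 : (n : ℚ) ≠ 0 := Nat.cast_ne_zero.mpr hn.ne'
  rw [div_eq_div_iff hn0 hp0]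
  constructor
  · intro h
    have hnat : (ArithmeticFunction.sigma 1 n) * p = (p + 1) * n := by
      exact_mod_cast h
    have hpn : p ∣ n := by
      have h1 : p ∣ (p + 1) * n := ⟨ArithmeticFunction.sigma 1 n, by linarith [hnat]⟩
      have hcop : Nat.Coprime p (p + 1) := Nat.coprime_self_add_right.mpr (Nat.coprime_one_right p)
      exact hcop.dvd_of_dvd_mul_left h1
    obtain ⟨m, rfl⟩ := hpn
    have hm : 0 < m := Nat.pos_of_mul_pos_left (by rwa [mul_comm] at hn)
    have hσ : ArithmeticFunction.sigma 1 (p * m) = (p + 1) * m := by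
      have := hnat
      rw [ArithmeticFunction.sigma_one_apply] at this ⊢
      nlinarith [this]
    by_cases hm1 : m = 1
    · subst hm1; exact mul_one p
    · have h2 : 1 < m := by omega
      exfalso
      have hsub : ({1, m, p * m} : Finset ℕ) ⊆ (p * m).divisors := by
        intro d hd
        simp only [Finset.mem_insert, Finset.mem_singleton] at hd
        rcases hd with rfl | rfl | rfl
        · exact Nat.one_mem_divisors.mpr hn.ne'
        · exact Nat.mem_divisors.mpr ⟨dvd_mul_left _ _, hn.ne'⟩
        · exact Nat.mem_divisors.mpr ⟨dvd_refl _, hn.ne'⟩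
      have hmn : m < p * m := lt_mul_left hm hp.one_lt
      have h1m : (1 : ℕ) ≠ m := by omega
      have h1pm : (1 : ℕ) ≠ p * m := by omega
      have hmpm : m ≠ p * m := by omega
      have hsum : ∑ d ∈ ({1, m, p * m} : Finset ℕ), d ≤ ArithmeticFunction.sigma 1 (p * m) := by
        rw [ArithmeticFunction.sigma_one_apply]
        exact Finset.sum_le_sum_of_subset hsub
      rw [Finset.sum_insert (by simp [h1m, h1pm]), Finset.sum_insert (by simp [hmpm]),
        Finset.sum_singleton] at hsum
      rw [hσ] at hsum
      nlinarith
  · rintro rfl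
    rw [ArithmeticFunction.sigma_one_apply, hp.divisors, Finset.sum_insert (by simp [hp.one_lt.ne]),
      Finset.sum_singleton]
    push_cast
    ring
end

section
/- There is no positive integer n such that σ(n)/n = 5/4. -/
/-!
Clearing denominators gives `4 σ(n) = 5 n`, so `4 ∣ n`. But the abundancy index can only grow
when passing to a multiple, since `d ↦ d m` maps the divisors of `k` into those of `k m`; hence a
multiple of `4` has abundancy at least `σ(4)/4 = 7/4 > 5/4`.
-/

open ArithmeticFunction
open scoped ArithmeticFunction.sigma

theorem ArithmeticFunction.sigma_one_mul_le_sigma_one_mul (k m : ℕ) :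
    σ 1 k * m ≤ σ 1 (k * m) := by
  rcases Nat.eq_zero_or_pos m with rfl | hm
  · simp
  have hsub : k.divisors.image (· * m) ⊆ (k * m).divisors := by
    simp only [Finset.subset_iff, Finset.mem_image, Nat.mem_divisors]
    rintro _ ⟨d, ⟨hdk, hk⟩, rfl⟩
    exact ⟨Nat.mul_dvd_mul_right hdk m, mul_ne_zero hk hm.ne'⟩
  calc σ 1 k * m = ∑ d ∈ k.divisors.image (· * m), d := by
        rw [sigma_one_apply, Finset.sum_mul,
          Finset.sum_image fun _ _ _ _ h ↦ Nat.eq_of_mul_eq_mul_right hm h]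
    _ ≤ σ 1 (k * m) := by
        rw [sigma_one_apply]
        exact Finset.sum_le_sum_of_subset hsub

theorem no_abundancy_five_fourths :
    ¬ ∃ n : ℕ, 0 < n ∧ (ArithmeticFunction.sigma 1 n : ℚ) / n = 5 / 4 := by
  rintro ⟨n, hn, h⟩
  have hσ : σ 1 n * 4 = 5 * n := by
    rw [div_eq_div_iff (by positivity) (by norm_num)] at h
    exact_mod_cast h
  obtain ⟨m, rfl⟩ : 4 ∣ n :=
    Nat.Coprime.dvd_of_dvd_mul_left (by norm_num) (Dvd.intro_left _ hσ)
  have hσ4 : σ 1 4 = 7 := by decide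
  have hle := sigma_one_mul_le_sigma_one_mul 4 m
  rw [hσ4] at hle
  omega
end

section
/- If k and m are coprime positive integers with m < k < σ(m), then there is no positive integer n with σ(n)/n = k/m. -/
lemma sigma_mul_le (m t : ℕ) (hm : 0 < m) (ht : 0 < t) :
    ArithmeticFunction.sigma 1 m * t ≤ ArithmeticFunction.sigma 1 (m * t) := by
  rw [ArithmeticFunction.sigma_one_apply, ArithmeticFunction.sigma_one_apply,
    Finset.sum_mul]
  have himg : ∑ d ∈ m.divisors, d * t = ∑ d ∈ m.divisors.image (· * t), d := by
    rw [Finset.sum_image]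
    intro a _ b _ h
    exact Nat.eq_of_mul_eq_mul_right ht h
  rw [himg]
  apply Finset.sum_le_sum_of_subset
  intro x hx
  simp only [Finset.mem_image] at hx
  obtain ⟨d, hd, rfl⟩ := hx
  rw [Nat.mem_divisors] at hd ⊢
  exact ⟨Nat.mul_dvd_mul hd.1 dvd_rfl, Nat.mul_ne_zero hm.ne' ht.ne'⟩

theorem not_abundancy_of_coprime (k m : ℕ) (hm : 0 < m) (hk : 0 < k)
    (hcop : Nat.Coprime k m) (h1 : m < k) (h2 : k < ArithmeticFunction.sigma 1 m) :
    ¬ ∃ n : ℕ, 0 < n ∧ (ArithmeticFunction.sigma 1 n : ℚ) / n = (k : ℚ) / m := by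
  rintro ⟨n, hn, heq⟩
  have hnq : (n : ℚ) ≠ 0 := Nat.cast_ne_zero.mpr hn.ne'
  have hmq : (m : ℚ) ≠ 0 := Nat.cast_ne_zero.mpr hm.ne'
  rw [div_eq_div_iff hnq hmq] at heq
  have hnat : ArithmeticFunction.sigma 1 n * m = k * n := by
    exact_mod_cast heq
  have hmdvd : m ∣ n := by
    have : m ∣ k * n := ⟨ArithmeticFunction.sigma 1 n, by linarith [hnat]⟩
    exact (Nat.Coprime.dvd_of_dvd_mul_left hcop.symm this)
  obtain ⟨t, rfl⟩ := hmdvd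
  have ht : 0 < t := Nat.pos_of_mul_pos_left (by rwa [mul_comm] at hn)
  have hs : ArithmeticFunction.sigma 1 (m * t) = k * t := by
    have := hnat
    rw [show k * (m * t) = (k * t) * m by ring] at this
    exact Nat.eq_of_mul_eq_mul_right hm this
  have hle := sigma_mul_le m t hm ht
  rw [hs] at hle
  have : ArithmeticFunction.sigma 1 m ≤ k :=
    Nat.le_of_mul_le_mul_right (by linarith) ht
  omega
end

section
/- The set of abundancy indices {σ(n)/n : n ∈ ℕ, n ≥ 1} is dense in the rationals greater than 1; i.e., for any rationals 1 < a < b there exists n with a < σ(n)/n < b. -/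
/-! For a finite set `s` of primes, `σ(∏ s) / ∏ s = ∏_{p ∈ s} (1 + 1/p)`. Run through the primes
`p > P` in increasing order, with `P` so large that every factor `1 + 1/p` is below `b / a`. The
partial products start at `1 ≤ a` and tend to infinity because `∑ 1/p` diverges, so the first one
exceeding `a` is still below `b`. -/

open Finset Filter ArithmeticFunction
open scoped ArithmeticFunction.sigma

theorem Finset.one_add_sum_le_prod_one_add {ι R : Type*} [CommSemiring R] [PartialOrder R]
    [IsOrderedRing R] (s : Finset ι) {f : ι → R} (hf : ∀ i ∈ s, 0 ≤ f i) :
    1 + ∑ i ∈ s, f i ≤ ∏ i ∈ s, (1 + f i) := by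
  classical
  induction s using Finset.induction_on with
  | empty => simp
  | insert x s hx ih =>
    have hx0 := hf x (mem_insert_self x s)
    have hs i (hi : i ∈ s) := hf i (mem_insert_of_mem hi)
    rw [sum_insert hx, prod_insert hx]
    calc 1 + (f x + ∑ i ∈ s, f i)
        ≤ 1 + (f x + ∑ i ∈ s, f i) + f x * ∑ i ∈ s, f i :=
          le_add_of_nonneg_right (mul_nonneg hx0 (sum_nonneg hs))
      _ = (1 + f x) * (1 + ∑ i ∈ s, f i) := by ring
      _ ≤ (1 + f x) * ∏ i ∈ s, (1 + f i) :=
          mul_le_mul_of_nonneg_left (ih hs) (add_nonneg zero_le_one hx0)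

theorem Nat.exists_lt_lt_of_forall_le_imp_lt {α : Type*} [LinearOrder α] {f : ℕ → α} {a b : α}
    (h0 : f 0 ≤ a) (hstep : ∀ k, f k ≤ a → f (k + 1) < b) (hf : ∃ k, a < f k) :
    ∃ k, a < f k ∧ f k < b := by
  classical
  obtain ⟨k, hk⟩ : ∃ k, Nat.find hf = k + 1 :=
    Nat.exists_eq_succ_of_ne_zero fun h => (h ▸ Nat.find_spec hf).not_ge h0
  exact ⟨k + 1, hk ▸ Nat.find_spec hf, hstep k (not_lt.1 (Nat.find_min hf (by omega)))⟩

theorem sigma_one_prod_of_prime {s : Finset ℕ} (hs : ∀ p ∈ s, p.Prime) :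
    σ 1 (∏ p ∈ s, p) = ∏ p ∈ s, (p + 1) := by
  rw [isMultiplicative_sigma.map_prod_of_prime s hs]
  refine prod_congr rfl fun p hp => ?_
  simpa [sum_range_succ, add_comm] using sigma_one_apply_prime_pow (i := 1) (hs p hp)

theorem sigma_one_prod_div_prod_of_prime {K : Type*} [Field K] [CharZero K] {s : Finset ℕ}
    (hs : ∀ p ∈ s, p.Prime) :
    (σ 1 (∏ p ∈ s, p) : K) / (∏ p ∈ s, p : ℕ) = ∏ p ∈ s, (1 + 1 / (p : K)) := by
  rw [sigma_one_prod_of_prime hs]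
  push_cast
  rw [← prod_div_distrib]
  refine prod_congr rfl fun p hp => ?_
  have : (p : K) ≠ 0 := by exact_mod_cast (hs p hp).ne_zero
  field_simp

theorem tendsto_sum_primesBelow_one_div :
    Tendsto (fun N : ℕ => ∑ p ∈ N.primesBelow, (1 / p : ℝ)) atTop atTop := by
  have := (not_summable_iff_tendsto_nat_atTop_of_nonneg
    (Set.indicator_nonneg fun n _ => by positivity)).mp not_summable_one_div_on_primes
  convert this using 2 with N
  rw [Nat.primesBelow, sum_filter]
  simp [Set.indicator_apply]

theorem tendsto_prod_primesBelow_sdiff_one_add_one_div (P : ℕ) :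
    Tendsto (fun N : ℕ => ∏ p ∈ N.primesBelow \ P.primesBelow, (1 + 1 / p : ℝ)) atTop atTop := by
  refine tendsto_atTop_mono' atTop ?_ <| tendsto_atTop_add_const_right _
    (1 - ∑ p ∈ P.primesBelow, (1 / p : ℝ)) tendsto_sum_primesBelow_one_div
  filter_upwards [eventually_ge_atTop P] with N hN
  rw [← sum_sdiff (Nat.primesBelow_mono hN)]
  calc _ = 1 + ∑ p ∈ N.primesBelow \ P.primesBelow, (1 / p : ℝ) := by ring
    _ ≤ _ := one_add_sum_le_prod_one_add _ fun p _ => by positivity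

theorem prod_primesBelow_succ_sdiff_le (P N : ℕ) :
    ∏ p ∈ (N + 1).primesBelow \ P.primesBelow, (1 + 1 / p : ℝ) ≤
      (1 + 1 / N) * ∏ p ∈ N.primesBelow \ P.primesBelow, (1 + 1 / p : ℝ) := by
  have hprod : 0 ≤ ∏ p ∈ N.primesBelow \ P.primesBelow, (1 + 1 / p : ℝ) :=
    prod_nonneg fun p _ => by positivity
  have hN : (1 : ℝ) ≤ 1 + 1 / N := le_add_of_nonneg_right (by positivity)
  rw [Nat.primesBelow_succ]
  split_ifs
  · by_cases hNP : N ∈ P.primesBelow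
    · rw [insert_sdiff_of_mem _ hNP]
      exact le_mul_of_one_le_left hprod hN
    · rw [insert_sdiff_of_notMem _ hNP,
        prod_insert fun h => Nat.notMem_primesBelow N (mem_sdiff.1 h).1]
  · exact le_mul_of_one_le_left hprod hN

theorem exists_lt_sigma_one_div_lt {a b : ℝ} (ha : 1 ≤ a) (hab : a < b) :
    ∃ n : ℕ, 0 < n ∧ a < σ 1 n / n ∧ σ 1 n / n < b := by
  obtain ⟨P, hP⟩ := exists_nat_one_div_lt (show 0 < b / a - 1 by
    rw [sub_pos, one_lt_div (by linarith)]; exact hab)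
  set F : ℕ → ℝ := fun N => ∏ p ∈ N.primesBelow \ (P + 1).primesBelow, (1 + 1 / p)
  have h0 : F (0 + (P + 1)) ≤ a := by simpa [F] using ha
  have hstep (k : ℕ) (hk : F (k + (P + 1)) ≤ a) : F (k + 1 + (P + 1)) < b := calc
    F (k + 1 + (P + 1)) ≤ (1 + 1 / (k + (P + 1) : ℕ)) * F (k + (P + 1)) := by
      rw [add_right_comm]; exact prod_primesBelow_succ_sdiff_le _ _
    _ ≤ (1 + 1 / ((P : ℝ) + 1)) * a := by gcongr; push_cast; linarith
    _ < b / a * a := by gcongr; linarith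
    _ = b := div_mul_cancel₀ b (by positivity)
  have hunbdd : ∃ k, a < F (k + (P + 1)) :=
    (((tendsto_prod_primesBelow_sdiff_one_add_one_div (P + 1)).comp
      (tendsto_add_atTop_nat (P + 1))).eventually_gt_atTop a).exists
  obtain ⟨k, hak, hkb⟩ := Nat.exists_lt_lt_of_forall_le_imp_lt h0 hstep hunbdd
  have hs : ∀ p ∈ (k + (P + 1)).primesBelow \ (P + 1).primesBelow, p.Prime :=
    fun p hp => Nat.prime_of_mem_primesBelow (mem_sdiff.1 hp).1
  refine ⟨_, prod_pos fun p hp => (hs p hp).pos, ?_⟩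
  rw [sigma_one_prod_div_prod_of_prime hs]
  exact ⟨hak, hkb⟩

theorem abundancy_dense (a b : ℚ) (ha : 1 < a) (hab : a < b) :
    ∃ n : ℕ, 0 < n ∧ a < (ArithmeticFunction.sigma 1 n : ℚ) / n ∧ (ArithmeticFunction.sigma 1 n : ℚ) / n < b := by
  obtain ⟨n, hn, han, hnb⟩ :=
    exists_lt_sigma_one_div_lt (a := a) (b := b) (by exact_mod_cast ha.le) (by exact_mod_cast hab)
  refine ⟨n, hn, ?_, ?_⟩ <;> rw [← Rat.cast_lt (K := ℝ)] <;> push_cast <;> assumption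
end

section
/- Let m be a positive integer and p a prime with p > 2m. Then among any 2m consecutive positive integers, there is at least one integer coprime to p·m. -/
theorem exists_coprime_in_consecutive (m p : ℕ) (hm : 0 < m) (hp : p.Prime)
    (hpm : p > 2 * m) (start : ℕ) (hstart : 0 < start) :
    ∃ i ∈ Finset.Ico start (start + 2 * m), Nat.Coprime i (p * m) := by
  have hp2 := hp.two_le
  -- coprime-to-p helper
  have hcp : ∀ i, ¬ p ∣ i → Nat.Coprime i p := fun i h =>
    Nat.coprime_comm.mp (hp.coprime_iff_not_dvd.mpr h)
  by_cases hm1 : m = 1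
  · subst hm1
    by_cases h : p ∣ start
    · refine ⟨start + 1, by simp [Finset.mem_Ico], ?_⟩
      rw [mul_one]
      refine hcp _ fun h2 => ?_
      have := Nat.dvd_sub h2 h
      simp at this
      omega
    · exact ⟨start, by simp [Finset.mem_Ico], by rw [mul_one]; exact hcp _ h⟩
  · have hm2 : 2 ≤ m := by omega
    set k := start / m with hk
    have hdm : m * k + start % m = start := Nat.div_add_mod start m
    have hmod : start % m < m := Nat.mod_lt _ hm
    set a := m * k + 1 with ha
    set b := if start ≤ a then a else a + m with hb
    have hbj : ∃ j, b = m * j + 1 := by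
      rw [hb]; split
      · exact ⟨k, rfl⟩
      · exact ⟨k + 1, by ring⟩
    obtain ⟨j, hj⟩ := hbj
    have hrange : start ≤ b ∧ b + m < start + 2 * m := by
      rw [hb]; split <;> omega
    have hcm : ∀ i, (∃ j', i = m * j' + 1) → Nat.Coprime i m := by
      rintro i ⟨j', rfl⟩
      exact (Nat.coprime_mul_left_add_left 1 m j').mpr (Nat.coprime_one_left m)
    by_cases hdvd : p ∣ b
    · refine ⟨b + m, by simp [Finset.mem_Ico]; omega, ?_⟩
      refine Nat.Coprime.mul_right (hcp _ fun h2 => ?_) ?_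
      · have := Nat.dvd_sub h2 hdvd
        simp at this
        exact absurd (Nat.le_of_dvd hm this) (by omega)
      · exact hcm _ ⟨j + 1, by rw [hj]; ring⟩
    · refine ⟨b, by simp [Finset.mem_Ico]; omega, ?_⟩
      exact Nat.Coprime.mul_right (hcp _ hdvd) (hcm _ ⟨j, hj⟩)
end

section
/- The set of rationals greater than 1 that are not abundancy indices (i.e., not of the form σ(n)/n for any positive integer n) is dense in the rationals greater than 1. -/
/-!
If `σ(n)/n = q` then the reduced denominator of `q` divides `n`, and the abundancy index is
monotone under divisibility, so `q ≥ σ(q.den)/q.den`. Hence every `q` with `q < σ(q.den)/q.den`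
is not an abundancy index. Such fractions are dense above `1`: take `M` with `σ(M)/M > b`
(a factorial, since `σ(k!)/k!` dominates the `k`-th harmonic number), a prime `p` so large that
`(p/b, p/a)` contains a multiple `D` of `M`, and `q = p/D`; its denominator is `D` because
`D < p`.
-/

open ArithmeticFunction
open scoped ArithmeticFunction.sigma

def abundancy (n : ℕ) : ℚ := (σ 1 n : ℚ) / n

theorem abundancy_eq_sum_inv_divisors {n : ℕ} (hn : 0 < n) :
    abundancy n = ∑ d ∈ n.divisors, (d : ℚ)⁻¹ := by
  have hn' : (n : ℚ) ≠ 0 := by exact_mod_cast hn.ne'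
  rw [abundancy, sigma_one_apply, div_eq_iff hn', Nat.cast_sum, Finset.sum_mul,
    ← Nat.sum_div_divisors n (fun d => (d : ℚ))]
  refine Finset.sum_congr rfl fun d hd => ?_
  have hd' : (d : ℚ) ≠ 0 := by exact_mod_cast (Nat.pos_of_mem_divisors hd).ne'
  rw [Nat.cast_div (Nat.dvd_of_mem_divisors hd) hd']
  field_simp

theorem abundancy_le_of_dvd {d n : ℕ} (hd : 0 < d) (hn : 0 < n) (hdn : d ∣ n) :
    abundancy d ≤ abundancy n := by
  rw [abundancy_eq_sum_inv_divisors hd, abundancy_eq_sum_inv_divisors hn]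
  exact Finset.sum_le_sum_of_subset_of_nonneg (Nat.divisors_subset_of_dvd hn.ne' hdn)
    fun _ _ _ => by positivity

theorem harmonic_le_abundancy_factorial (k : ℕ) : harmonic k ≤ abundancy k.factorial := by
  rw [abundancy_eq_sum_inv_divisors k.factorial_pos, harmonic_eq_sum_Icc]
  refine Finset.sum_le_sum_of_subset_of_nonneg (fun i hi => ?_) fun _ _ _ => by positivity
  rw [Finset.mem_Icc] at hi
  exact Nat.mem_divisors.mpr ⟨Nat.dvd_factorial hi.1 hi.2, k.factorial_ne_zero⟩

theorem exists_lt_harmonic (b : ℚ) : ∃ k : ℕ, b < harmonic k := by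
  obtain ⟨n, hn⟩ := exists_nat_ge (Real.exp b)
  refine ⟨n, ?_⟩
  have : (b : ℝ) < harmonic n :=
    calc (b : ℝ) = Real.log (Real.exp b) := (Real.log_exp b).symm
      _ < Real.log ↑(n + 1) := by
        gcongr
        push_cast
        linarith
      _ ≤ harmonic n := log_add_one_le_harmonic n
  exact_mod_cast this

theorem exists_lt_abundancy (b : ℚ) : ∃ M : ℕ, 0 < M ∧ b < abundancy M := by
  obtain ⟨k, hk⟩ := exists_lt_harmonic b
  exact ⟨k.factorial, k.factorial_pos, hk.trans_le (harmonic_le_abundancy_factorial k)⟩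

theorem den_natCast_div_dvd (m n : ℕ) : ((m : ℚ) / n).den ∣ n := by
  have := Rat.den_dvd m n
  rw [← Rat.natCast_div_eq_divInt] at this
  exact_mod_cast this

theorem abundancy_den_le_abundancy {n : ℕ} (hn : 0 < n) :
    abundancy (abundancy n).den ≤ abundancy n :=
  abundancy_le_of_dvd (abundancy n).den_pos hn (den_natCast_div_dvd _ n)

theorem not_exists_abundancy_eq_of_lt {q : ℚ} (hq : q < abundancy q.den) :
    ¬ ∃ n : ℕ, 0 < n ∧ abundancy n = q := by
  rintro ⟨n, hn, rfl⟩
  exact hq.not_ge (abundancy_den_le_abundancy hn)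

theorem exists_nat_mul_mem_Ioo {M : ℕ} (hM : 0 < M) {x y : ℚ} (hx : 0 ≤ x) (hxy : x + M < y) :
    ∃ t : ℕ, x < t * M ∧ t * M < y := by
  have hM' : (0 : ℚ) < M := by exact_mod_cast hM
  refine ⟨⌊x / M⌋₊ + 1, ?_, ?_⟩
  · rw [← div_lt_iff₀ hM']
    exact_mod_cast Nat.lt_floor_add_one (x / M)
  · have : (⌊x / M⌋₊ : ℚ) * M ≤ x := (le_div_iff₀ hM').mp (Nat.floor_le (by positivity))
    push_cast
    linarith

theorem exists_prime_div_mem_Ioo {M : ℕ} (hM : 0 < M) {a b : ℚ} (ha : 0 < a) (hab : a < b) :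
    ∃ p D : ℕ, p.Prime ∧ 0 < D ∧ M ∣ D ∧ a < (p : ℚ) / D ∧ (p : ℚ) / D < b := by
  obtain ⟨p, hMp, hp⟩ := Nat.exists_infinite_primes (⌈M * a * b / (b - a)⌉₊ + 1)
  have hp' : (0 : ℚ) < p := by exact_mod_cast hp.pos
  have hb : 0 < b := ha.trans hab
  have hgap : p / b + M < p / a := by
    have : M * a * b / (b - a) < p :=
      (Nat.le_ceil _).trans_lt (by exact_mod_cast Nat.lt_of_succ_le hMp)
    rw [div_lt_iff₀ (sub_pos.mpr hab)] at this
    rw [div_add' _ _ _ hb.ne', div_lt_div_iff₀ hb ha]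
    nlinarith
  obtain ⟨t, hlo, hhi⟩ := exists_nat_mul_mem_Ioo hM (by positivity) hgap
  have hD : (0 : ℚ) < t * M := (div_pos hp' hb).trans hlo
  refine ⟨p, t * M, hp, by exact_mod_cast hD, dvd_mul_left M t, ?_, ?_⟩ <;> push_cast
  · rwa [lt_div_iff₀ hD, ← lt_div_iff₀' ha]
  · rwa [div_lt_iff₀ hD, ← div_lt_iff₀' hb]

theorem den_prime_div_eq {p D : ℕ} (hp : p.Prime) (hD : 0 < D) (hDp : D < p) :
    ((p : ℚ) / D).den = D := by
  have := Rat.den_div_eq_of_coprime (a := p) (b := D) (by exact_mod_cast hD)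
    (Nat.coprime_of_lt_prime hD.ne' hDp hp)
  rw [Int.cast_natCast, Int.cast_natCast] at this
  exact_mod_cast this

theorem non_abundancy_dense (a b : ℚ) (ha : 1 < a) (hab : a < b) :
    ∃ q : ℚ, a < q ∧ q < b ∧ ¬ ∃ n : ℕ, 0 < n ∧ (ArithmeticFunction.sigma 1 n : ℚ) / n = q := by
  obtain ⟨M, hM, hbM⟩ := exists_lt_abundancy b
  obtain ⟨p, D, hp, hD, hMD, haq, hqb⟩ := exists_prime_div_mem_Ioo hM (zero_lt_one.trans ha) hab
  have hDp : D < p := by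
    have : (D : ℚ) < p := by
      rw [← one_lt_div (by exact_mod_cast hD)]
      exact ha.trans haq
    exact_mod_cast this
  refine ⟨p / D, haq, hqb, not_exists_abundancy_eq_of_lt (q := p / D) ?_⟩
  rw [den_prime_div_eq hp hD hDp]
  exact hqb.trans (hbM.trans_le (abundancy_le_of_dvd hM hD hMD))
end

section
/- Let k and m be coprime positive integers with m < k < σ(m). If a positive integer n has abundancy index σ(n)/n = k/(k-m), then n is not feebly amicable with any positive integer; i.e., there is no positive integer s with n/σ(n) + s/σ(s) = 1. -/
open ArithmeticFunction in
lemma sigma_mul_le_aux (m t : ℕ) (hm : 0 < m) (ht : 0 < t) :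
    sigma 1 m * t ≤ sigma 1 (m * t) := by
  rw [sigma_one_apply, sigma_one_apply, Finset.sum_mul]
  have himg : ∑ e ∈ m.divisors.image (· * t), (e : ℕ) = ∑ d ∈ m.divisors, d * t :=
    Finset.sum_image (fun a _ b _ h => Nat.eq_of_mul_eq_mul_right ht h)
  rw [← himg]
  apply Finset.sum_le_sum_of_subset
  intro e he
  simp only [Finset.mem_image, Nat.mem_divisors] at he ⊢
  obtain ⟨d, ⟨hd, _⟩, rfl⟩ := he
  exact ⟨mul_dvd_mul hd dvd_rfl, Nat.mul_ne_zero hm.ne' ht.ne'⟩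

theorem not_feebly_amicable_of_abundancy (k m n : ℕ) (hm : 0 < m) (hk : 0 < k)
    (hn : 0 < n) (hcop : Nat.Coprime k m) (h1 : m < k) (h2 : k < ArithmeticFunction.sigma 1 m)
    (habun : (ArithmeticFunction.sigma 1 n : ℚ) / n = (k : ℚ) / ((k : ℚ) - m)) :
    ¬ ∃ s : ℕ, 0 < s ∧ (n : ℚ) / ArithmeticFunction.sigma 1 n + (s : ℚ) / ArithmeticFunction.sigma 1 s = 1 := by
  rintro ⟨s, hs, heq⟩
  have hσ : ∀ a : ℕ, 0 < a → 0 < ArithmeticFunction.sigma 1 a := by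
    intro a ha
    rw [ArithmeticFunction.sigma_one_apply]
    exact Finset.sum_pos (fun d hd => Nat.pos_of_mem_divisors hd)
      ⟨a, Nat.mem_divisors_self a ha.ne'⟩
  have hσn : (0:ℚ) < (ArithmeticFunction.sigma 1 n : ℚ) := by exact_mod_cast hσ n hn
  have hσs : (0:ℚ) < (ArithmeticFunction.sigma 1 s : ℚ) := by exact_mod_cast hσ s hs
  have hkm : ((k:ℚ) - m) ≠ 0 := by
    have : (m:ℚ) < k := by exact_mod_cast h1
    linarith
  have hk0 : (k:ℚ) ≠ 0 := by positivity
  have hn0 : (n:ℚ) ≠ 0 := by positivity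
  -- from habun: σ(n) * (k - m) = k * n
  have h3 : (ArithmeticFunction.sigma 1 n : ℚ) * ((k:ℚ) - m) = k * n := by
    field_simp at habun; linarith [habun]
  -- derive s * k = m * σ(s)
  have h4 : (s:ℚ) * k = m * (ArithmeticFunction.sigma 1 s : ℚ) := by
    field_simp at heq
    nlinarith [heq, h3, hσs.ne', hσn.ne']
  have h5 : s * k = m * ArithmeticFunction.sigma 1 s := by exact_mod_cast h4
  have hmds : m ∣ s := by
    have : m ∣ s * k := ⟨ArithmeticFunction.sigma 1 s, h5⟩
    exact (Nat.Coprime.dvd_of_dvd_mul_right hcop.symm this)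
  obtain ⟨t, rfl⟩ := hmds
  have ht : 0 < t := by
    rcases Nat.eq_zero_or_pos t with h|h
    · simp [h] at hs
    · exact h
  have hle := sigma_mul_le_aux m t hm ht
  -- σ(m)*t ≤ σ(m*t), and m * σ(m*t) = (m*t)*k = m*t*k so σ(m*t) = t*k
  have h6 : ArithmeticFunction.sigma 1 (m * t) = t * k := by
    have := h5
    nlinarith [h5]
  rw [h6] at hle
  nlinarith [hle, h2, ht]
end

section
/- Let k and m be coprime positive integers with m < k < σ(m). If a positive integer n has abundancy index σ(n)/n = k/(k-m), then n is not a member of any amicable pair; i.e., there is no positive integer s ≠ n with σ(n) = σ(s) = n + s. -/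
lemma aux_sigma_mul_le (m t : ℕ) (hm : 0 < m) (ht : 0 < t) :
    t * ArithmeticFunction.sigma 1 m ≤ ArithmeticFunction.sigma 1 (m * t) := by
  rw [ArithmeticFunction.sigma_one_apply, ArithmeticFunction.sigma_one_apply, Finset.mul_sum]
  calc ∑ d ∈ m.divisors, t * d
      = ∑ d ∈ m.divisors.image (t * ·), d := by
        rw [Finset.sum_image]
        intro a _ b _ h
        exact Nat.eq_of_mul_eq_mul_left ht h
    _ ≤ ∑ e ∈ (m * t).divisors, e := by
        apply Finset.sum_le_sum_of_subset
        intro e he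
        simp only [Finset.mem_image, Nat.mem_divisors] at he ⊢
        obtain ⟨d, ⟨hd, _⟩, rfl⟩ := he
        refine ⟨?_, by positivity⟩
        rw [mul_comm m t]
        exact Nat.mul_dvd_mul_left t hd

theorem not_amicable_of_abundancy (k m n : ℕ) (hm : 0 < m) (hk : 0 < k)
    (hn : 0 < n) (hcop : Nat.Coprime k m) (h1 : m < k) (h2 : k < ArithmeticFunction.sigma 1 m)
    (habun : (ArithmeticFunction.sigma 1 n : ℚ) / n = (k : ℚ) / ((k : ℚ) - m)) :
    ¬ ∃ s : ℕ, 0 < s ∧ s ≠ n ∧ ArithmeticFunction.sigma 1 n = ArithmeticFunction.sigma 1 s ∧ ArithmeticFunction.sigma 1 s = n + s := by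
  rintro ⟨s, hs, hne, h3, h4⟩
  set σn := ArithmeticFunction.sigma 1 n with hσn
  have hkm : (0:ℚ) < (k:ℚ) - m := by
    have : (m:ℚ) < k := by exact_mod_cast h1
    linarith
  have hcross : (σn : ℚ) * ((k:ℚ) - m) = k * n := by
    have hn' : (n:ℚ) ≠ 0 := by positivity
    field_simp at habun
    linarith [habun]
  have hcrossN : σn * (k - m) = k * n := by
    have : ((σn * (k - m) : ℕ) : ℚ) = ((k * n : ℕ) : ℚ) := by
      push_cast [Nat.cast_sub h1.le]
      linarith [hcross]
    exact_mod_cast this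
  have hns : σn = n + s := h3.trans h4
  -- s * (k - m) = m * n
  have hd : k - m + m = k := Nat.sub_add_cancel h1.le
  have hsd : s * (k - m) = m * n := by
    rw [hns] at hcrossN
    nlinarith [hcrossN, hd]
  -- m ∣ s
  have hcop' : Nat.Coprime m (k - m) := by
    exact (Nat.coprime_sub_self_right h1.le).mpr (Nat.coprime_comm.mp hcop)
  have hms : m ∣ s := by
    have : m ∣ s * (k - m) := hsd ▸ Dvd.intro n rfl
    exact (Nat.Coprime.dvd_of_dvd_mul_right hcop' this)
  obtain ⟨t, rfl⟩ := hms
  have ht : 0 < t := by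
    rcases Nat.eq_zero_or_pos t with h | h
    · simp [h] at hs
    · exact h
  have hnt : n = t * (k - m) := by
    have h' : m * (t * (k - m)) = m * n := by rw [← hsd]; ring
    exact (Nat.eq_of_mul_eq_mul_left hm h').symm
  have hσnt : σn = t * k := by
    rw [hns, hnt]
    calc t * (k - m) + m * t = t * (k - m + m) := by ring
      _ = t * k := by rw [hd]
  -- now contradiction
  have hge : t * ArithmeticFunction.sigma 1 m ≤ ArithmeticFunction.sigma 1 (m * t) :=
    aux_sigma_mul_le m t hm ht
  have : ArithmeticFunction.sigma 1 (m * t) = σn := h3.symm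
  have hlt : t * k < t * ArithmeticFunction.sigma 1 m := (Nat.mul_lt_mul_left ht).mpr h2
  omega
end
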